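/- Let G = (V,E) be an (s,δ)-edge expander and C a clause configuration over the Tseitin variables with μ(C) ≤ s. Then |C| ≥ δ·μ(C), i.e., the clause space of the configuration is at least δ times its complexity measure. -/
import Mathlib


/-- A literal over Boolean variables of type `X`: a variable together with a sign. -/
abbrev Lit (X : Type) := X × Bool

/-- A clause: a finite set of literals, interpreted disjunctively. -/
abbrev Clause (X : Type) := Finset (Lit X)

/-- A configuration: a finite set of clauses, interpreted conjunctively. -/
abbrev Config (X : Type) := Finset (Clause X)

/-- The negation of a literal. -/
def negLit {X : Type} (l : Lit X) : Lit X := (l.1, !l.2)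

/-- A clause (or term) is trivial if it contains both a variable and its negation. -/
def IsTrivialClause {X : Type} (C : Clause X) : Prop :=
  ∃ v : X, (v, true) ∈ C ∧ (v, false) ∈ C

/-- A total assignment satisfies a literal. -/
def SatLit {X : Type} (α : X → Bool) (l : Lit X) : Prop := α l.1 = l.2

/-- A total assignment satisfies a clause (some literal is true). -/
def SatClause {X : Type} (α : X → Bool) (C : Clause X) : Prop := ∃ l ∈ C, SatLit α l

/-- A total assignment satisfies a term (all literals are true). -/
def SatTerm {X : Type} (α : X → Bool) (T : Finset (Lit X)) : Prop := ∀ l ∈ T, SatLit α l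

/-- A total assignment satisfies a configuration (all clauses are true). -/
def SatConfig {X : Type} (α : X → Bool) (𝒞 : Config X) : Prop := ∀ C ∈ 𝒞, SatClause α C

/-- The term `¬E` negating a clause `E`. -/
def negTerm {X : Type} [DecidableEq X] (E : Clause X) : Finset (Lit X) := E.image negLit

/-- The edges of `G` incident to the vertex `v`. -/
def incidentEdges {V : Type} [Fintype V] [DecidableEq V] (G : SimpleGraph V)
    [DecidableRel G.Adj] (v : V) : Finset (Sym2 V) :=
  G.edgeFinset.filter (fun e => v ∈ e)

/-- The canonical CNF encoding `PARITY_{v,χ}` of the parity constraint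
`∑_{e ∋ v} x_e ≡ χ(v) (mod 2)`: for each assignment `f` of the edge variables
violating the constraint at `v`, the clause over the edges incident to `v`
falsified exactly by `f`. -/
def parityCNF {V : Type} [Fintype V] [DecidableEq V] (G : SimpleGraph V)
    [DecidableRel G.Adj] (χ : V → ZMod 2) (v : V) : Set (Clause (Sym2 V)) :=
  { C | ∃ f : Sym2 V → Bool,
      (∑ e ∈ incidentEdges G v, (if f e then (1 : ZMod 2) else 0)) ≠ χ v ∧
      C = (incidentEdges G v).image (fun e => (e, ! f e)) }

/-- The Tseitin formula `Ts(G, χ) = ⋀_{v ∈ V} PARITY_{v,χ}`, as a set of clauses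
over the edge variables. -/
def Tseitin {V : Type} [Fintype V] [DecidableEq V] (G : SimpleGraph V)
    [DecidableRel G.Adj] (χ : V → ZMod 2) : Set (Clause (Sym2 V)) :=
  ⋃ v : V, parityCNF G χ v

/-- The assignment `α` to the edge variables satisfies the parity constraint at `v`. -/
def SatParity {V : Type} [Fintype V] [DecidableEq V] (G : SimpleGraph V)
    [DecidableRel G.Adj] (χ : V → ZMod 2) (α : Sym2 V → Bool) (v : V) : Prop :=
  (∑ e ∈ incidentEdges G v, (if α e then (1 : ZMod 2) else 0)) = χ v

/-- The term `T` together with the parity axioms of the vertices in `V'` is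
unsatisfiable. -/
def UnsatWith {V : Type} [Fintype V] [DecidableEq V] (G : SimpleGraph V)
    [DecidableRel G.Adj] (χ : V → ZMod 2) (T : Finset (Lit (Sym2 V)))
    (V' : Finset V) : Prop :=
  ¬ ∃ α : Sym2 V → Bool, SatTerm α T ∧ ∀ v ∈ V', ∀ C ∈ parityCNF G χ v, SatClause α C

/-- The term complexity measure: `μ(T)` is the least number of parity axioms of
`Ts(G,χ)` that together with `T` are contradictory. -/
noncomputable def muT {V : Type} [Fintype V] [DecidableEq V] (G : SimpleGraph V)
    [DecidableRel G.Adj] (χ : V → ZMod 2) (T : Finset (Lit (Sym2 V))) : ℕ :=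
  sInf { n : ℕ | ∃ V' : Finset V, V'.card = n ∧ UnsatWith G χ T V' }

/-- The configuration complexity measure: `μ(𝒞)` is the maximum of `μ(T)` over
all terms `T` implying the configuration `𝒞`. -/
noncomputable def muC {V : Type} [Fintype V] [DecidableEq V] (G : SimpleGraph V)
    [DecidableRel G.Adj] (χ : V → ZMod 2) (𝒞 : Config (Sym2 V)) : ℕ :=
  sSup { m : ℕ | ∃ T : Finset (Lit (Sym2 V)),
    (∀ α : Sym2 V → Bool, SatTerm α T → SatConfig α 𝒞) ∧ muT G χ T = m }

/-- The edge boundary `∂(U)` of a vertex set `U`: edges of `G` with exactly one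
endpoint in `U`. -/
def edgeBoundary {V : Type} (G : SimpleGraph V) (U : Finset V) : Set (Sym2 V) :=
  { e | e ∈ G.edgeSet ∧ ∃ a b : V, e = s(a, b) ∧ a ∈ U ∧ b ∉ U }

/-- `G` is an `(s, δ)`-edge expander: every vertex set `U` with `|U| ≤ s` has
`|∂(U)| ≥ δ |U|`. -/
def IsEdgeExpander {V : Type} (G : SimpleGraph V) (s : ℕ) (δ : ℝ) : Prop :=
  ∀ U : Finset V, U.card ≤ s → δ * U.card ≤ (edgeBoundary G U).ncard


section AuxSpaceLB

open Finset

lemma aux_satAll_iff {V : Type} [Fintype V] [DecidableEq V] (G : SimpleGraph V)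
    [DecidableRel G.Adj] (χ : V → ZMod 2) (α : Sym2 V → Bool) (v : V) :
    (∀ C ∈ parityCNF G χ v, SatClause α C) ↔ SatParity G χ α v := by
  constructor
  · intro h
    by_contra hne
    obtain ⟨l, hl, hsat⟩ := h ((incidentEdges G v).image (fun e => (e, ! α e))) ⟨α, hne, rfl⟩
    simp only [Finset.mem_image] at hl
    obtain ⟨e, _, rfl⟩ := hl
    simp [SatLit] at hsat
  · intro h C hC
    obtain ⟨f, hf, rfl⟩ := hC
    by_contra hno
    apply hf
    rw [← h]
    apply Finset.sum_congr rfl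
    intro e he
    have hα : α e = f e := by
      by_contra hne
      exact hno ⟨(e, ! f e), Finset.mem_image_of_mem _ he, by
        simp only [SatLit]
        cases hfe : f e <;> cases hae : α e <;> simp_all⟩
    rw [hα]

lemma aux_flip_sum {X : Type} [DecidableEq X] (α : X → Bool) (e' : X) (S : Finset X) :
    ∑ e ∈ S, (if Function.update α e' (!α e') e then (1 : ZMod 2) else 0) =
      (∑ e ∈ S, (if α e then (1 : ZMod 2) else 0)) + (if e' ∈ S then 1 else 0) := by
  by_cases hS : e' ∈ S
  · rw [if_pos hS, ← Finset.add_sum_erase _ _ hS,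
      ← Finset.add_sum_erase _ (fun e => if α e then (1 : ZMod 2) else 0) hS]
    have h1 : ∀ e ∈ S.erase e',
        (if Function.update α e' (!α e') e then (1 : ZMod 2) else 0)
          = (if α e then (1 : ZMod 2) else 0) := by
      intro e he
      rw [Function.update_of_ne (Finset.ne_of_mem_erase he)]
    have h2 : (if !α e' then (1 : ZMod 2) else 0) = (if α e' then (1 : ZMod 2) else 0) + 1 := by
      cases α e' <;> decide
    rw [Finset.sum_congr rfl h1, Function.update_self, h2]
    ring
  · rw [if_neg hS, add_zero]
    apply Finset.sum_congr rfl
    intro e he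
    rw [Function.update_of_ne (show e ≠ e' by rintro rfl; exact hS he)]

lemma aux_total {V : Type} [Fintype V] [DecidableEq V] (G : SimpleGraph V)
    [DecidableRel G.Adj] (α : Sym2 V → Bool) :
    ∑ v : V, ∑ e ∈ incidentEdges G v, (if α e then (1 : ZMod 2) else 0) = 0 := by
  have h1 : ∀ v : V, ∑ e ∈ incidentEdges G v, (if α e then (1 : ZMod 2) else 0)
      = ∑ e ∈ G.edgeFinset, (if v ∈ e then (if α e then (1 : ZMod 2) else 0) else 0) := by
    intro v
    rw [incidentEdges, Finset.sum_filter]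
  simp_rw [h1]
  rw [Finset.sum_comm]
  apply Finset.sum_eq_zero
  intro e he
  rw [← Finset.sum_filter]
  induction e with
  | _ a b =>
    have hab : a ≠ b := G.ne_of_adj (SimpleGraph.mem_edgeFinset.mp he)
    have hfil : Finset.univ.filter (fun v => v ∈ s(a, b)) = {a, b} := by
      ext v
      simp [Sym2.mem_iff]
    rw [hfil, Finset.sum_pair hab]
    have : ∀ c : ZMod 2, c + c = 0 := by decide
    exact this _

lemma aux_unsat_univ {V : Type} [Fintype V] [DecidableEq V] (G : SimpleGraph V)
    [DecidableRel G.Adj] (χ : V → ZMod 2) (hodd : ∑ v : V, χ v = 1)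
    (T : Finset (Lit (Sym2 V))) : UnsatWith G χ T Finset.univ := by
  rintro ⟨α, hT, hax⟩
  have h1 : ∀ v : V, SatParity G χ α v := fun v =>
    (aux_satAll_iff G χ α v).mp (hax v (Finset.mem_univ v))
  have h2 : ∑ v : V, χ v = 0 := by
    rw [Finset.sum_congr rfl (fun v _ => (h1 v).symm)]
    exact aux_total G α
  rw [hodd] at h2
  exact one_ne_zero h2

lemma aux_muT_le_card {V : Type} [Fintype V] [DecidableEq V] (G : SimpleGraph V)
    [DecidableRel G.Adj] (χ : V → ZMod 2) (hodd : ∑ v : V, χ v = 1)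
    (T : Finset (Lit (Sym2 V))) : muT G χ T ≤ Fintype.card V :=
  Nat.sInf_le ⟨Finset.univ, Finset.card_univ, aux_unsat_univ G χ hodd T⟩

lemma aux_muT_exists {V : Type} [Fintype V] [DecidableEq V] (G : SimpleGraph V)
    [DecidableRel G.Adj] (χ : V → ZMod 2) (hodd : ∑ v : V, χ v = 1)
    (T : Finset (Lit (Sym2 V))) :
    ∃ V' : Finset V, V'.card = muT G χ T ∧ UnsatWith G χ T V' := by
  have hne : {n : ℕ | ∃ V' : Finset V, V'.card = n ∧ UnsatWith G χ T V'}.Nonempty :=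
    ⟨Fintype.card V, Finset.univ, Finset.card_univ, aux_unsat_univ G χ hodd T⟩
  exact Nat.sInf_mem hne

lemma aux_muT_mono {V : Type} [Fintype V] [DecidableEq V] (G : SimpleGraph V)
    [DecidableRel G.Adj] (χ : V → ZMod 2) (hodd : ∑ v : V, χ v = 1)
    {T T' : Finset (Lit (Sym2 V))} (h : T' ⊆ T) : muT G χ T ≤ muT G χ T' := by
  obtain ⟨V', hc, hu⟩ := aux_muT_exists G χ hodd T'
  exact Nat.sInf_le ⟨V', hc, fun ⟨α, hα, hax⟩ => hu ⟨α, fun l hl => hα l (h hl), hax⟩⟩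

end AuxSpaceLB

/-- if `G` is an `(s, δ)`-edge expander and `𝒞` is a clause
configuration over the Tseitin variables with `μ(𝒞) ≤ s`, then the clause space of
`𝒞` is at least `δ · μ(𝒞)`. -/
theorem space_lower_bound_from_measure {V : Type} [Fintype V] [DecidableEq V]
    (G : SimpleGraph V) [DecidableRel G.Adj] (χ : V → ZMod 2)
    (s : ℕ) (δ : ℝ) (hexp : IsEdgeExpander G s δ)
    (hodd : ∑ v : V, χ v = 1)
    (𝒞 : Config (Sym2 V)) (hmu : muC G χ 𝒞 ≤ s) :
    δ * (muC G χ 𝒞 : ℝ) ≤ (𝒞.card : ℝ) := by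
  classical
  rcases Nat.eq_zero_or_pos (muC G χ 𝒞) with hmu0 | hmupos
  · rw [hmu0]
    simp
  · -- the set defining muC
    have hset : ({m : ℕ | ∃ T : Finset (Lit (Sym2 V)),
        (∀ α : Sym2 V → Bool, SatTerm α T → SatConfig α 𝒞) ∧ muT G χ T = m}).Nonempty := by
      by_contra hemp
      rw [Set.not_nonempty_iff_eq_empty] at hemp
      have : muC G χ 𝒞 = 0 := by
        rw [muC, hemp]
        exact csSup_empty
      omega
    have hbdd : BddAbove {m : ℕ | ∃ T : Finset (Lit (Sym2 V)),
        (∀ α : Sym2 V → Bool, SatTerm α T → SatConfig α 𝒞) ∧ muT G χ T = m} :=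
      ⟨Fintype.card V, fun m ⟨T, _, hm⟩ => hm ▸ aux_muT_le_card G χ hodd T⟩
    obtain ⟨T, hTimp, hTmu⟩ : ∃ T : Finset (Lit (Sym2 V)),
        (∀ α : Sym2 V → Bool, SatTerm α T → SatConfig α 𝒞) ∧ muT G χ T = muC G χ 𝒞 :=
      Nat.sSup_mem hset hbdd
    -- T is satisfiable
    obtain ⟨α₀, hα₀⟩ : ∃ α, SatTerm α T := by
      by_contra hns
      push_neg at hns
      have h0 : muT G χ T = 0 :=
        Nat.le_zero.mp (Nat.sInf_le ⟨∅, Finset.card_empty, fun ⟨α, hα, _⟩ => hns α hα⟩)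
      omega
    -- pick one common literal per clause
    set S : Config (Sym2 V) := 𝒞.filter (fun C => (T ∩ C).Nonempty) with hSdef
    have hpick : ∀ C ∈ S, ∃ l, l ∈ T ∩ C := fun C hC => (Finset.mem_filter.mp hC).2
    set T' : Finset (Lit (Sym2 V)) :=
      S.attach.image (fun C => (hpick C.1 C.2).choose) with hT'def
    have hT'card : T'.card ≤ 𝒞.card :=
      le_trans Finset.card_image_le
        (by rw [Finset.card_attach]; exact Finset.card_filter_le _ _)
    have hT'sub : T' ⊆ T := by
      intro l hl
      simp only [hT'def, Finset.mem_image] at hl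
      obtain ⟨C, _, rfl⟩ := hl
      exact (Finset.mem_inter.mp (hpick C.1 C.2).choose_spec).1
    have hT'imp : ∀ α : Sym2 V → Bool, SatTerm α T' → SatConfig α 𝒞 := by
      intro α hα C hC
      by_cases hCS : C ∈ S
      · refine ⟨(hpick C hCS).choose,
          (Finset.mem_inter.mp (hpick C hCS).choose_spec).2, hα _ ?_⟩
        simp only [hT'def, Finset.mem_image]
        exact ⟨⟨C, hCS⟩, Finset.mem_attach _ _, rfl⟩
      · have hdisj : ∀ l, l ∈ T → l ∉ C := fun l hlT hlC =>
          hCS (Finset.mem_filter.mpr ⟨hC, ⟨l, Finset.mem_inter.mpr ⟨hlT, hlC⟩⟩⟩)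
        have htriv : IsTrivialClause C := by
          by_contra hnt
          set β : Sym2 V → Bool := fun e =>
            if (e, true) ∈ T then true else if (e, false) ∈ T then false
            else !(decide ((e, true) ∈ C)) with hβ
          have hβT : SatTerm β T := by
            rintro ⟨e, b⟩ hl
            cases b
            · have hnt' : (e, true) ∉ T := by
                intro h
                have h1 := hα₀ _ h
                have h2 := hα₀ _ hl
                simp only [SatLit] at h1 h2
                rw [h1] at h2
                exact Bool.noConfusion h2
              simp [SatLit, hβ, hnt', hl]
            · simp [SatLit, hβ, hl]
          have hCfalse : ¬ SatClause β C := by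
            rintro ⟨⟨e, b⟩, hlC, hsat⟩
            simp only [SatLit] at hsat
            by_cases h2 : (e, true) ∈ T
            · have hb : b = false := by
                cases b
                · rfl
                · exact absurd hlC (hdisj _ h2)
              rw [hb] at hsat
              simp [hβ, h2] at hsat
            · by_cases h3 : (e, false) ∈ T
              · have hb : b = true := by
                  cases b
                  · exact absurd hlC (hdisj _ h3)
                  · rfl
                rw [hb] at hsat
                simp [hβ, h2, h3] at hsat
              · cases b
                · have hC1 : (e, true) ∈ C := by
                    simp only [hβ, h2, h3, if_false] at hsat
                    simpa using hsat
                  exact hnt ⟨e, hC1, hlC⟩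
                · simp [hβ, h2, h3, hlC] at hsat
          exact hCfalse (hTimp β hβT C hC)
        obtain ⟨x, hx1, hx2⟩ := htriv
        cases h : α x
        · exact ⟨(x, false), hx2, h⟩
        · exact ⟨(x, true), hx1, h⟩
    have hT'mu : muT G χ T' = muC G χ 𝒞 := by
      have h1 : muT G χ T ≤ muT G χ T' := aux_muT_mono G χ hodd hT'sub
      have h2 : muT G χ T' ≤ muC G χ 𝒞 := le_csSup hbdd ⟨T', hT'imp, rfl⟩
      omega
    obtain ⟨Vstar, hVcard, hVuns⟩ := aux_muT_exists G χ hodd T'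
    rw [hT'mu] at hVcard
    -- every boundary edge appears in T'
    have hbound : ∀ e ∈ edgeBoundary G Vstar, ∃ b, (e, b) ∈ T' := by
      rintro e ⟨heE, a, b, rfl, haV, hbV⟩
      by_contra hnb
      push_neg at hnb
      have hlt : (Vstar.erase a).card < muT G χ T' := by
        rw [Finset.card_erase_of_mem haV, hT'mu]
        omega
      have hnu : ¬ UnsatWith G χ T' (Vstar.erase a) := by
        intro hu
        have hle : muT G χ T' ≤ (Vstar.erase a).card :=
          Nat.sInf_le ⟨Vstar.erase a, rfl, hu⟩
        omega
      rw [UnsatWith, not_not] at hnu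
      obtain ⟨α, hαT, hαax⟩ := hnu
      have hnpa : ¬ SatParity G χ α a := by
        intro hpa
        exact hVuns ⟨α, hαT, fun v hv C hC => by
          rcases eq_or_ne v a with rfl | hva
          · exact (aux_satAll_iff G χ α v).mpr hpa C hC
          · exact hαax v (Finset.mem_erase.mpr ⟨hva, hv⟩) C hC⟩
      have hα'T : SatTerm (Function.update α s(a, b) (!α s(a, b))) T' := by
        rintro ⟨e', b'⟩ hl
        have hne : e' ≠ s(a, b) := fun h => hnb b' (h ▸ hl)
        have h := hαT _ hl
        simpa [SatLit, Function.update_of_ne hne] using h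
      have hmem : s(a, b) ∈ incidentEdges G a := by
        rw [incidentEdges, Finset.mem_filter, SimpleGraph.mem_edgeFinset]
        exact ⟨heE, Sym2.mem_mk_left a b⟩
      have hpa' : SatParity G χ (Function.update α s(a, b) (!α s(a, b))) a := by
        show (∑ e ∈ incidentEdges G a,
          (if Function.update α s(a, b) (!α s(a, b)) e then (1 : ZMod 2) else 0)) = χ a
        rw [aux_flip_sum, if_pos hmem]
        have hz : ∀ x y : ZMod 2, x ≠ y → x + 1 = y := by decide
        exact hz _ _ hnpa
      have hothers : ∀ v ∈ Vstar.erase a,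
          SatParity G χ (Function.update α s(a, b) (!α s(a, b))) v := by
        intro v hv
        have hva : v ≠ a := (Finset.mem_erase.mp hv).1
        have hvb : v ≠ b := fun h => hbV (h ▸ (Finset.mem_erase.mp hv).2)
        have hnm : s(a, b) ∉ incidentEdges G v := by
          rw [incidentEdges, Finset.mem_filter]
          rintro ⟨-, hvm⟩
          rcases Sym2.mem_iff.mp hvm with h | h
          exacts [hva h, hvb h]
        show (∑ e ∈ incidentEdges G v,
          (if Function.update α s(a, b) (!α s(a, b)) e then (1 : ZMod 2) else 0)) = χ v
        rw [aux_flip_sum, if_neg hnm, add_zero]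
        exact (aux_satAll_iff G χ α v).mp (fun C hC => hαax v hv C hC)
      exact hVuns ⟨Function.update α s(a, b) (!α s(a, b)), hα'T, fun v hv C hC => by
        rcases eq_or_ne v a with rfl | hva
        · exact (aux_satAll_iff G χ _ v).mpr hpa' C hC
        · exact (aux_satAll_iff G χ _ v).mpr
            (hothers v (Finset.mem_erase.mpr ⟨hva, hv⟩)) C hC⟩
    -- counting
    have hinj : (edgeBoundary G Vstar).ncard ≤ T'.card := by
      set F : Sym2 V → Lit (Sym2 V) :=
        fun e => (e, if (e, true) ∈ T' then true else false) with hF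
      have hFinj : Function.Injective F := fun x y h => congrArg Prod.fst h
      have hFsub : F '' edgeBoundary G Vstar ⊆ (T' : Set (Lit (Sym2 V))) := by
        rintro _ ⟨e, he, rfl⟩
        obtain ⟨b, hb⟩ := hbound e he
        by_cases h : (e, true) ∈ T'
        · simp [hF, h]
        · have hb' : b = false := by
            cases b
            · rfl
            · exact absurd hb h
          rw [hb'] at hb
          simpa [hF, h] using hb
      calc (edgeBoundary G Vstar).ncard
          = (F '' edgeBoundary G Vstar).ncard := (Set.ncard_image_of_injective _ hFinj).symm
        _ ≤ (T' : Set (Lit (Sym2 V))).ncard :=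
            Set.ncard_le_ncard hFsub (Finset.finite_toSet T')
        _ = T'.card := Set.ncard_coe_finset T'
    have h1 : δ * (muC G χ 𝒞 : ℝ) ≤ ((edgeBoundary G Vstar).ncard : ℝ) := by
      have h := hexp Vstar (by rw [hVcard]; exact hmu)
      rwa [hVcard] at h
    have h2 : ((edgeBoundary G Vstar).ncard : ℝ) ≤ (𝒞.card : ℝ) := by
      exact_mod_cast le_trans hinj hT'card
    linarith
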